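/- arXiv:1407.7920 — 3 statements merged into one kernel-verified Lean document; each statement's English description precedes it below -/
import Mathlib

section
/- If α is a continuous rotationally symmetric norm on L^∞(𝕋), then the α-closure of C(𝕋) (the continuous complex functions on 𝕋) equals L^α(𝕋). -/
open MeasureTheory Filter
open scoped ENNReal Real

noncomputable section

instance fact_two_pi_pos : Fact ((0:ℝ) < 2 * Real.pi) := ⟨by positivity⟩

/-- The circle `𝕋`, modelled additively as `ℝ / 2πℤ`. -/
abbrev 𝕋 : Type := AddCircle (2 * Real.pi)

/-- Normalized Haar (arc-length) probability measure on `𝕋`. -/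
abbrev m : Measure 𝕋 := AddCircle.haarAddCircle

/-- A rotationally symmetric norm on `L^∞(𝕋)`, extended to all measurable functions via
`α f = sup { α s : s simple, |s| ≤ |f| a.e. }`. -/
structure RotNorm where
  α : (𝕋 → ℂ) → ℝ≥0∞
  ae_eq : ∀ f g : 𝕋 → ℂ, f =ᵐ[m] g → α f = α g
  add_le : ∀ f g : 𝕋 → ℂ, α (f + g) ≤ α f + α g
  smul_eq : ∀ (c : ℂ) (f : 𝕋 → ℂ), α (c • f) = (‖c‖₊ : ℝ≥0∞) * α f
  one_eq : α 1 = 1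
  abs_eq : ∀ f : 𝕋 → ℂ, α (fun z => (‖f z‖ : ℂ)) = α f
  rot_eq : ∀ (w : 𝕋) (f : 𝕋 → ℂ), α (fun z => f (z - w)) = α f
  simple_sup : ∀ f : 𝕋 → ℂ, AEMeasurable f m →
    α f = ⨆ (s : SimpleFunc 𝕋 ℂ) (_ : ∀ᵐ z ∂m, ‖s z‖ ≤ ‖f z‖), α s

/-- `α` is in addition a symmetric gauge norm: invariant under all invertible
measure-preserving transformations of `𝕋`. -/
def RotNorm.IsSymmGauge (N : RotNorm) : Prop :=
  ∀ φ : 𝕋 ≃ᵐ 𝕋, MeasurePreserving (⇑φ) m m → ∀ f : 𝕋 → ℂ, N.α (f ∘ ⇑φ) = N.α f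

/-- Continuity of a norm: `α(χ_E) → 0` as `m(E) → 0⁺`. -/
def IsContNorm (γ : (𝕋 → ℂ) → ℝ≥0∞) : Prop :=
  ∀ ε : ℝ≥0∞, 0 < ε → ∃ δ : ℝ≥0∞, 0 < δ ∧
    ∀ E : Set 𝕋, MeasurableSet E → m E < δ → γ (E.indicator fun _ => (1:ℂ)) < ε

/-- Membership in `ℒ^α(𝕋)`: measurable with finite norm. -/
def MemScriptL (γ : (𝕋 → ℂ) → ℝ≥0∞) (f : 𝕋 → ℂ) : Prop :=
  AEMeasurable f m ∧ γ f ≠ ∞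

/-- Membership in `L^α(𝕋)`: the `α`-closure of `L^∞(𝕋)` in `ℒ^α(𝕋)`. -/
def MemL (γ : (𝕋 → ℂ) → ℝ≥0∞) (f : 𝕋 → ℂ) : Prop :=
  MemScriptL γ f ∧ ∀ ε : ℝ≥0∞, 0 < ε → ∃ g : 𝕋 → ℂ, MemLp g ⊤ m ∧ γ (f - g) < ε

/-- Strong continuity: continuity together with `L^α = ℒ^α`. -/
def StronglyCont (γ : (𝕋 → ℂ) → ℝ≥0∞) : Prop :=
  IsContNorm γ ∧ ∀ f : 𝕋 → ℂ, MemScriptL γ f → MemL γ f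

/-- The dual norm `α′`. -/
def dualOf (γ : (𝕋 → ℂ) → ℝ≥0∞) (f : 𝕋 → ℂ) : ℝ≥0∞ :=
  ⨆ (h : 𝕋 → ℂ) (_ : MemLp h ⊤ m) (_ : γ h ≤ 1), ∫⁻ z, (‖f z * h z‖₊ : ℝ≥0∞) ∂m

/-- The linear span of the analytic monomials `zⁿ`, `n ≥ 0`. -/
def analyticPolys : Submodule ℂ (𝕋 → ℂ) :=
  Submodule.span ℂ (Set.range fun n : ℕ => ((fourier (n : ℤ) : C(𝕋, ℂ)) : 𝕋 → ℂ))

/-- Membership in `H^α(𝕋)`: the `α`-closure of the span of `{zⁿ : n ≥ 0}`. -/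
def MemH (γ : (𝕋 → ℂ) → ℝ≥0∞) (f : 𝕋 → ℂ) : Prop :=
  MemScriptL γ f ∧ ∀ ε : ℝ≥0∞, 0 < ε → ∃ p ∈ analyticPolys, γ (f - p) < ε

/-- Membership in the classical Hardy space `H¹(𝕋)`. -/
def MemH1 (f : 𝕋 → ℂ) : Prop :=
  Integrable f m ∧ ∀ n : ℤ, n < 0 → fourierCoeff f n = 0

/-- The point `e^{it}` of the unit circle in `ℂ` corresponding to `t ∈ 𝕋`. -/
def eCirc : 𝕋 → ℂ := fun t => (AddCircle.toCircle t : ℂ)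

/-!
Given `g ∈ L^∞(𝕋)` with `‖g‖ ≤ M`, approximate it in `L¹` by a continuous `k`, retracted radially
so that `‖k‖ ≤ M` as well. Off a set `S` the error `|g - k|` is below `η`, and Markov's inequality
makes `m S` small; on `S` the error is at most `2M`. Hence `α(g - k) ≤ η + 2M α(χ_S)`, and
continuity of `α` makes this small because the bound `2M` is fixed before `S` is chosen.
-/

section RadialRetraction

variable {E : Type*} [NormedAddCommGroup E]

def radialRetraction [NormedSpace ℝ E] (M : ℝ) (x : E) : E := (M / max M ‖x‖) • x

lemma norm_radialRetraction_le [NormedSpace ℝ E] {M : ℝ} (hM : 0 < M) (x : E) :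
    ‖radialRetraction M x‖ ≤ M := by
  have hden : 0 < max M ‖x‖ := lt_max_of_lt_left hM
  rw [radialRetraction, norm_smul, Real.norm_of_nonneg (div_nonneg hM.le hden.le),
    div_mul_eq_mul_div, div_le_iff₀ hden]
  exact mul_le_mul_of_nonneg_left (le_max_right _ _) hM.le

lemma continuous_radialRetraction [NormedSpace ℝ E] {M : ℝ} (hM : 0 < M) :
    Continuous (radialRetraction (E := E) M) :=
  (continuous_const.div (continuous_const.max continuous_norm)
    fun _ => (lt_max_of_lt_left hM).ne').smul continuous_id

lemma norm_radialRetraction_sub_le [InnerProductSpace ℝ E] {M : ℝ} (hM : 0 < M) (x : E) {y : E}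
    (hy : ‖y‖ ≤ M) : ‖radialRetraction M x - y‖ ≤ ‖x - y‖ := by
  rcases le_or_gt ‖x‖ M with hx | hx
  · rw [radialRetraction, max_eq_left hx, div_self hM.ne', one_smul]
  rw [radialRetraction, max_eq_right hx.le]
  set c : ℝ := M / ‖x‖
  have hx0 : 0 < ‖x‖ := hM.trans hx
  have hc1 : c ≤ 1 := (div_le_one hx0).2 hx.le
  have hc0 : 0 ≤ c := div_nonneg hM.le hx0.le
  have hcx : c * ‖x‖ = M := div_mul_cancel₀ _ hx0.ne'
  have hinner : inner ℝ x y ≤ c * (‖x‖ * ‖x‖) := by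
    nlinarith [real_inner_le_norm x y, norm_nonneg x]
  refine (pow_le_pow_iff_left₀ (norm_nonneg _) (norm_nonneg _) two_ne_zero).1 ?_
  rw [norm_sub_sq_real, norm_sub_sq_real, real_inner_smul_left, norm_smul,
    Real.norm_of_nonneg hc0, mul_pow]
  nlinarith [mul_nonneg (sub_nonneg.2 hc1) (sub_nonneg.2 hinner),
    mul_nonneg (mul_nonneg (sub_nonneg.2 hc1) (sub_nonneg.2 hc1)) (sq_nonneg ‖x‖)]

end RadialRetraction

theorem exists_continuous_norm_le_eLpNorm_sub_le {X E : Type*} [TopologicalSpace X]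
    [NormalSpace X] [MeasurableSpace X] [BorelSpace X] [NormedAddCommGroup E]
    [InnerProductSpace ℝ E] {μ : Measure X} [IsFiniteMeasure μ] [μ.WeaklyRegular]
    {p : ℝ≥0∞} (hp : p ≠ ∞) {g : X → E} (hg : AEStronglyMeasurable g μ) {M : ℝ} (hM : 0 < M)
    (hgM : ∀ᵐ x ∂μ, ‖g x‖ ≤ M) {ε : ℝ≥0∞} (hε : ε ≠ 0) :
    ∃ k : C(X, E), (∀ x, ‖k x‖ ≤ M) ∧ eLpNorm (g - ⇑k) p μ ≤ ε := by
  obtain ⟨h, hgh, -⟩ := (MemLp.of_bound hg M hgM).exists_boundedContinuous_eLpNorm_sub_le hp hε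
  refine ⟨⟨radialRetraction M ∘ h, (continuous_radialRetraction hM).comp h.continuous⟩,
    fun x => norm_radialRetraction_le hM (h x), (eLpNorm_mono_ae ?_).trans hgh⟩
  filter_upwards [hgM] with x hx
  simpa only [Pi.sub_apply, ContinuousMap.coe_mk, Function.comp_apply, norm_sub_rev (g x)]
    using norm_radialRetraction_sub_le hM (h x) hx

theorem exists_measurableSet_ae_norm_le_add_indicator {X E : Type*} [MeasurableSpace X]
    [NormedAddCommGroup E] {μ : Measure X} {u : X → E} (hu : AEStronglyMeasurable u μ)
    {C : ℝ} (huC : ∀ᵐ x ∂μ, ‖u x‖ ≤ C) {η : ℝ} (hη : 0 ≤ η) :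
    ∃ S : Set X, MeasurableSet S ∧ ENNReal.ofReal η * μ S ≤ eLpNorm u 1 μ ∧
      ∀ᵐ x ∂μ, ‖u x‖ ≤ η + S.indicator (fun _ => C) x := by
  set S := toMeasurable μ {x | ENNReal.ofReal η ≤ ‖u x‖ₑ}
  refine ⟨S, measurableSet_toMeasurable _ _, ?_, ?_⟩
  · rw [measure_toMeasurable, eLpNorm_one_eq_lintegral_enorm]
    exact mul_meas_ge_le_lintegral₀ hu.enorm _
  filter_upwards [huC] with x hx
  by_cases hxS : x ∈ S
  · rw [Set.indicator_of_mem hxS]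
    exact hx.trans (le_add_of_nonneg_left hη)
  · have hlt : ‖u x‖ₑ < ENNReal.ofReal η := not_le.1 fun h => hxS (subset_toMeasurable _ _ h)
    rw [Set.indicator_of_notMem hxS, add_zero]
    rw [← ofReal_norm] at hlt
    exact (ENNReal.ofReal_lt_ofReal_iff'.1 hlt).1.le

namespace RotNorm

variable (N : RotNorm)

lemma mono {u v : 𝕋 → ℂ} (hu : AEMeasurable u m) (hv : AEMeasurable v m)
    (h : ∀ᵐ z ∂m, ‖u z‖ ≤ ‖v z‖) : N.α u ≤ N.α v := by
  rw [N.simple_sup u hu, N.simple_sup v hv]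
  exact iSup₂_le fun s hs => le_iSup₂_of_le s ((hs.and h).mono fun z hz => hz.1.trans hz.2) le_rfl

lemma le_ofReal_add_mul_indicator {u : 𝕋 → ℂ} (hu : AEMeasurable u m) {S : Set 𝕋}
    (hS : MeasurableSet S) {η C : ℝ} (hη : 0 ≤ η) (hC : 0 ≤ C)
    (h : ∀ᵐ z ∂m, ‖u z‖ ≤ η + S.indicator (fun _ => C) z) :
    N.α u ≤ ENNReal.ofReal η + ENNReal.ofReal C * N.α (S.indicator fun _ => 1) := by
  set v : 𝕋 → ℂ := (η : ℂ) • 1 + (C : ℂ) • S.indicator fun _ => 1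
  have hv : AEMeasurable v m := by
    fun_prop (disch := exact hS)
  have hnorm_v : ∀ z, ‖v z‖ = η + S.indicator (fun _ => C) z := by
    intro z
    by_cases hz : z ∈ S
    · simp [v, hz, ← Complex.ofReal_add, Complex.norm_real, abs_of_nonneg (add_nonneg hη hC)]
    · simp [v, hz, abs_of_nonneg hη]
  have hnorm_ofReal : ∀ r : ℝ, 0 ≤ r → (‖(r : ℂ)‖₊ : ℝ≥0∞) = ENNReal.ofReal r := fun r hr => by
    rw [← enorm_eq_nnnorm, ← ofReal_norm, Complex.norm_real, Real.norm_of_nonneg hr]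
  calc N.α u ≤ N.α v := N.mono hu hv (h.mono fun z hz => (hnorm_v z).symm ▸ hz)
    _ ≤ N.α ((η : ℂ) • 1) + N.α ((C : ℂ) • S.indicator fun _ => 1) := N.add_le _ _
    _ = _ := by rw [N.smul_eq, N.smul_eq, N.one_eq, mul_one, hnorm_ofReal η hη, hnorm_ofReal C hC]

theorem exists_continuous_lt_of_memLp_top (hN : IsContNorm N.α) {g : 𝕋 → ℂ} (hg : MemLp g ⊤ m)
    {ε : ℝ≥0∞} (hε : 0 < ε) : ∃ k : C(𝕋, ℂ), N.α (g - ⇑k) < ε := by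
  obtain ⟨r, -, hr0, hrε⟩ := ENNReal.lt_iff_exists_real_btwn.1 hε
  have hr : 0 < r := ENNReal.ofReal_pos.1 hr0
  set M := lpNorm g ∞ m + 1
  have hM : 0 < M := add_pos_of_nonneg_of_pos lpNorm_nonneg one_pos
  have hgM : ∀ᵐ z ∂m, ‖g z‖ ≤ M :=
    (ae_le_lpNorm_exponent_top hg).mono fun z hz => hz.trans (le_add_of_nonneg_right zero_le_one)
  obtain ⟨δ, hδ0, hδ⟩ :=
    hN (ENNReal.ofReal (r / 2 / (2 * M))) (ENNReal.ofReal_pos.2 (by positivity))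
  obtain ⟨δ', hδ'0, hδ'δ⟩ := exists_between hδ0
  obtain ⟨k, hkM, hgk⟩ := exists_continuous_norm_le_eLpNorm_sub_le ENNReal.one_ne_top
    hg.aestronglyMeasurable hM hgM (ε := ENNReal.ofReal (r / 2) * δ')
    (mul_ne_zero (ENNReal.ofReal_pos.2 (half_pos hr)).ne' hδ'0.ne')
  have hgkM : ∀ᵐ z ∂m, ‖(g - ⇑k) z‖ ≤ 2 * M := hgM.mono fun z hz =>
    (norm_sub_le _ _).trans (by linarith [hkM z])
  obtain ⟨S, hS, hSm, hgkS⟩ := exists_measurableSet_ae_norm_le_add_indicator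
    (hg.aestronglyMeasurable.sub k.continuous.aestronglyMeasurable) hgkM (half_pos hr).le
  have hmS : m S < δ :=
    ((ENNReal.mul_le_mul_iff_right (ENNReal.ofReal_pos.2 (half_pos hr)).ne' ENNReal.ofReal_ne_top).1
      (hSm.trans hgk)).trans_lt hδ'δ
  refine ⟨k, ?_⟩
  calc N.α (g - ⇑k)
      ≤ ENNReal.ofReal (r / 2) + ENNReal.ofReal (2 * M) * N.α (S.indicator fun _ => 1) :=
        N.le_ofReal_add_mul_indicator (hg.aestronglyMeasurable.sub
          k.continuous.aestronglyMeasurable).aemeasurable hS (half_pos hr).le (by positivity) hgkS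
    _ < ENNReal.ofReal (r / 2) + ENNReal.ofReal (r / 2) := by
        refine ENNReal.add_lt_add_left ENNReal.ofReal_ne_top ?_
        calc ENNReal.ofReal (2 * M) * N.α (S.indicator fun _ => 1)
            < ENNReal.ofReal (2 * M) * ENNReal.ofReal (r / 2 / (2 * M)) :=
              ENNReal.mul_lt_mul_right (by simpa using hM) ENNReal.ofReal_ne_top (hδ S hS hmS)
          _ = ENNReal.ofReal (r / 2) := by
              rw [← ENNReal.ofReal_mul (by positivity), mul_div_cancel₀ _ (by positivity)]
    _ = ENNReal.ofReal r := by
        rw [← ENNReal.ofReal_add (half_pos hr).le (half_pos hr).le, add_halves]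
    _ < ε := hrε

end RotNorm

/-- If α is a continuous rotationally symmetric norm, the α-closure of
`C(𝕋)` equals `L^α(𝕋)`. -/
theorem continuous_closure_eq_Lalpha
    (N : RotNorm) (hN : IsContNorm N.α) (f : 𝕋 → ℂ) :
    MemL N.α f ↔
      (MemScriptL N.α f ∧ ∀ ε : ℝ≥0∞, 0 < ε → ∃ g : C(𝕋, ℂ), N.α (f - ⇑g) < ε) := by
  refine ⟨fun ⟨hf, hf_approx⟩ => ⟨hf, fun ε hε => ?_⟩, fun ⟨hf, hf_approx⟩ => ⟨hf, fun ε hε => ?_⟩⟩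
  · obtain ⟨g, hg, hfg⟩ := hf_approx (ε / 2) (ENNReal.half_pos hε.ne')
    obtain ⟨k, hgk⟩ := N.exists_continuous_lt_of_memLp_top hN hg (ENNReal.half_pos hε.ne')
    refine ⟨k, ?_⟩
    calc N.α (f - ⇑k) = N.α ((f - g) + (g - ⇑k)) := by rw [sub_add_sub_cancel]
      _ ≤ N.α (f - g) + N.α (g - ⇑k) := N.add_le _ _
      _ < ε / 2 + ε / 2 := ENNReal.add_lt_add hfg hgk
      _ = ε := ENNReal.add_halves ε
  · obtain ⟨g, hfg⟩ := hf_approx ε hε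
    exact ⟨g, memLp_top_of_bound g.continuous.aestronglyMeasurable ‖g‖
      (.of_forall g.norm_coe_le_norm), hfg⟩

end
end

section
/- If α is a continuous rotationally symmetric norm on L^∞(𝕋), then (ℒ^α(𝕋), α) is a Banach space, and one has the inclusions L^∞(𝕋) ⊆ L^α(𝕋) ⊆ ℒ^α(𝕋) ⊆ L^1(𝕋). -/
open MeasureTheory Filter
open scoped ENNReal Real

noncomputable section

/-!
Everything rests on `∫ |f| dm ≤ 4 α(f)`. For bounded `f` with `t = ∫ |f| dm > 0`, a second-moment
argument (adding one rotation at a time, each with nonpositive cross term against the sum so far)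
gives rotations `w₁, …, wₙ` with `∑ₖ |f(z + wₖ)| ≥ n t / 2` off a set `E` so small that continuity
gives `α(χ_E) ≤ 1/2`. Rotation invariance turns `n t / 2 ≤ ∑ₖ |f(· + wₖ)| + (n t / 2) χ_E` into
`n t / 2 ≤ n α(f) + n t / 4`. Hence `ℒ^α ⊆ L¹` and an `α`-Cauchy sequence has an a.e. convergent
subsequence; continuity also yields the Fatou property `α(lim gₖ) ≤ liminf α(gₖ)` for a.e. limits
(through convergence in measure), which makes the a.e. limit the `α`-limit.
-/

lemma Finset.abs_sum_le_card_mul {ι : Type*} (s : Finset ι) {f : ι → ℝ} {B : ℝ}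
    (h : ∀ i, |f i| ≤ B) : |∑ i ∈ s, f i| ≤ s.card * B :=
  (Finset.abs_sum_le_sum_abs _ _).trans ((Finset.sum_le_sum fun i _ => h i).trans (by simp))

lemma mul_measureReal_lt_half_le_integral_sq_sub {α : Type*} [MeasurableSpace α] {μ : Measure α}
    [IsFiniteMeasure μ] {X : α → ℝ} (hX : ∀ x, 0 ≤ X x) {c : ℝ}
    (hint : Integrable (fun x => (X x - c) ^ 2) μ) :
    (c / 2) ^ 2 * μ.real {x | X x < c / 2} ≤ ∫ x, (X x - c) ^ 2 ∂μ := calc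
  (c / 2) ^ 2 * μ.real {x | X x < c / 2}
      ≤ (c / 2) ^ 2 * μ.real {x | (c / 2) ^ 2 ≤ (X x - c) ^ 2} := by
      have hsub : {x | X x < c / 2} ⊆ {x | (c / 2) ^ 2 ≤ (X x - c) ^ 2} :=
        fun x (hx : X x < c / 2) => show (c / 2) ^ 2 ≤ (X x - c) ^ 2 by
          nlinarith [mul_pos (by linarith : 0 < c / 2 - X x)
            (by linarith [hX x] : 0 < 3 * c / 2 - X x)]
      gcongr
      exact measure_ne_top _ _
  _ ≤ ∫ x, (X x - c) ^ 2 ∂μ :=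
      mul_meas_ge_le_integral_of_nonneg (.of_forall fun x => sq_nonneg _) hint _

section Translates

variable {G : Type*} [MeasurableSpace G] [AddCommGroup G] [MeasurableAdd₂ G]
  {μ : Measure G} [IsProbabilityMeasure μ] [μ.IsAddLeftInvariant]

lemma exists_integral_sq_add_translate_le {T h : G → ℝ} (hT : Measurable T) (hh : Measurable h)
    {A B : ℝ} (hTA : ∀ z, |T z| ≤ A) (hhB : ∀ z, |h z| ≤ B) (hmean : ∫ z, h z ∂μ = 0) :
    ∃ w, ∫ z, (T z + h (z + w)) ^ 2 ∂μ ≤ ∫ z, T z ^ 2 ∂μ + ∫ z, h z ^ 2 ∂μ := by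
  have hbound : ∀ z w, ‖T z * h (z + w)‖ ≤ A * B := fun z w => by
    rw [norm_mul, Real.norm_eq_abs, Real.norm_eq_abs]
    exact mul_le_mul (hTA z) (hhB _) (abs_nonneg _) ((abs_nonneg _).trans (hTA z))
  have hprod : Integrable (fun p : G × G => T p.2 * h (p.2 + p.1)) (μ.prod μ) :=
    .of_bound (by fun_prop) (A * B) (.of_forall fun p => hbound p.2 p.1)
  -- the cross term `∫ T(z) h(z + w) dz` has mean zero in `w`, so it is `≤ 0` for some `w`
  obtain ⟨w, hw⟩ := exists_le_integral hprod.integral_prod_left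
  have hcross : ∫ w, ∫ z, T z * h (z + w) ∂μ ∂μ = 0 := by
    rw [integral_integral_swap hprod]
    simp_rw [integral_const_mul, integral_add_left_eq_self, hmean, mul_zero, integral_zero]
  refine ⟨w, ?_⟩
  have hT2 : Integrable (fun z => T z ^ 2) μ :=
    .of_bound (by fun_prop) (A ^ 2) (.of_forall fun z => by
      rw [norm_pow, Real.norm_eq_abs]; gcongr; exact hTA z)
  have hh2 : Integrable (fun z => h (z + w) ^ 2) μ :=
    .of_bound ((hh.comp (measurable_add_const w)).pow_const 2).aestronglyMeasurable (B ^ 2)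
      (.of_forall fun z => by rw [norm_pow, Real.norm_eq_abs]; gcongr; exact hhB _)
  have hTh : Integrable (fun z => 2 * (T z * h (z + w))) μ :=
    (Integrable.of_bound (by fun_prop) (A * B) (.of_forall fun z => hbound z w)).const_mul 2
  calc ∫ z, (T z + h (z + w)) ^ 2 ∂μ
      = ∫ z, (T z ^ 2 + 2 * (T z * h (z + w))) + h (z + w) ^ 2 ∂μ := by
        congr 1; ext z; ring
    _ = ∫ z, T z ^ 2 ∂μ + 2 * ∫ z, T z * h (z + w) ∂μ + ∫ z, h (z + w) ^ 2 ∂μ := by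
        rw [integral_add _ hh2, integral_add hT2 hTh, integral_const_mul]
        exact hT2.add hTh
    _ ≤ ∫ z, T z ^ 2 ∂μ + ∫ z, h z ^ 2 ∂μ := by
        rw [integral_add_right_eq_self (fun z => h z ^ 2) w]
        linarith

lemma exists_integral_sq_sum_translates_le {h : G → ℝ} (hh : Measurable h) {B : ℝ}
    (hB : ∀ z, |h z| ≤ B) (hmean : ∫ z, h z ∂μ = 0) (n : ℕ) :
    ∃ w : Fin n → G, ∫ z, (∑ k, h (z + w k)) ^ 2 ∂μ ≤ n * ∫ z, h z ^ 2 ∂μ := by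
  induction n with
  | zero => exact ⟨Fin.elim0, by simp⟩
  | succ n ih =>
    obtain ⟨w, hw⟩ := ih
    obtain ⟨v, hv⟩ := exists_integral_sq_add_translate_le
      (T := fun z => ∑ k, h (z + w k))
      (Finset.measurable_sum _ fun k _ => hh.comp (measurable_add_const (w k))) hh
      (fun z => by simpa using Finset.univ.abs_sum_le_card_mul fun k => hB (z + w k)) hB hmean
    refine ⟨Fin.snoc w v, ?_⟩
    simp only [Fin.sum_univ_castSucc, Fin.snoc_castSucc, Fin.snoc_last]
    push_cast
    linarith

lemma exists_translates_measure_sum_lt_half_mean_lt {g : G → ℝ} (hg : Measurable g) {B : ℝ}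
    (hg0 : ∀ z, 0 ≤ g z) (hgB : ∀ z, g z ≤ B) (ht : 0 < ∫ z, g z ∂μ) {δ : ℝ≥0∞} (hδ : 0 < δ) :
    ∃ n : ℕ, 0 < n ∧ ∃ w : Fin n → G,
      μ {z | ∑ k, g (z + w k) < n * (∫ z, g z ∂μ) / 2} < δ := by
  set t := ∫ z, g z ∂μ
  obtain ⟨r, -, hr0, hrδ⟩ := ENNReal.lt_iff_exists_real_btwn.mp hδ
  rw [ENNReal.ofReal_pos] at hr0
  have hg_int : Integrable g μ :=
    .of_bound hg.aestronglyMeasurable B (.of_forall fun z => by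
      rw [Real.norm_eq_abs, abs_of_nonneg (hg0 z)]; exact hgB z)
  have hmean : ∫ z, (g z - t) ∂μ = 0 := by
    rw [integral_sub hg_int (integrable_const t)]; simp [t]
  have hgt : ∀ z, |g z - t| ≤ B + t := fun z =>
    abs_sub_le_iff.mpr ⟨by linarith [hgB z], by linarith [hg0 z, hgB z]⟩
  set V := ∫ z, (g z - t) ^ 2 ∂μ
  obtain ⟨n₀, hn₀⟩ := exists_nat_gt (4 * V / (t ^ 2 * r))
  set n := n₀ + 1
  have hn : (0 : ℝ) < n := by positivity
  have hnV : 4 * V < n * (t ^ 2 * r) := by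
    rw [div_lt_iff₀ (by positivity)] at hn₀
    push_cast [n]; nlinarith
  obtain ⟨w, hw⟩ := exists_integral_sq_sum_translates_le (h := fun z => g z - t)
    (hg.sub measurable_const) hgt hmean n
  have hS : Integrable (fun z => (∑ k, (g (z + w k) - t)) ^ 2) μ :=
    .of_bound ((Finset.measurable_sum _ fun k _ =>
      (hg.comp (measurable_add_const (w k))).sub measurable_const).pow_const 2).aestronglyMeasurable
      ((n * (B + t)) ^ 2) (.of_forall fun z => by
        rw [Real.norm_eq_abs, abs_pow]
        gcongr
        simpa using Finset.univ.abs_sum_le_card_mul fun k => hgt (z + w k))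
  simp only [Finset.sum_sub_distrib, Finset.sum_const, Finset.card_univ, Fintype.card_fin,
    nsmul_eq_mul] at hw hS
  have hcheb := mul_measureReal_lt_half_le_integral_sq_sub
    (fun z => Finset.sum_nonneg fun k _ => hg0 (z + w k)) hS
  have hbad : μ.real {z | ∑ k, g (z + w k) < n * t / 2} < r := by
    by_contra! h
    have h1 : n * (n * (t ^ 2 * r)) ≤ n * (4 * V) := by
      nlinarith [mul_le_mul_of_nonneg_left h (sq_nonneg (n * t / 2))]
    linarith [le_of_mul_le_mul_left h1 hn]
  refine ⟨n, n₀.succ_pos, w, lt_of_le_of_lt ?_ hrδ⟩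
  rw [← ofReal_measureReal]
  exact ENNReal.ofReal_le_ofReal hbad.le

end Translates

lemma IsContNorm.tendsto_indicator {γ : (𝕋 → ℂ) → ℝ≥0∞} (hγ : IsContNorm γ) {ι : Type*}
    {l : Filter ι} {A : ι → Set 𝕋} (hA : ∀ i, MeasurableSet (A i))
    (h : Tendsto (fun i => m (A i)) l (nhds 0)) :
    Tendsto (fun i => γ ((A i).indicator fun _ => (1 : ℂ))) l (nhds 0) := by
  refine ENNReal.tendsto_nhds_zero.mpr fun ε hε => ?_
  obtain ⟨δ, hδ, hsmall⟩ := hγ ε hε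
  filter_upwards [h.eventually_lt_const hδ] with i hi
  exact (hsmall _ (hA i) hi).le

namespace RotNorm

variable (N : RotNorm)

lemma α_zero : N.α 0 = 0 := by
  simpa using N.smul_eq 0 0

lemma α_const (c : ℂ) : N.α (fun _ => c) = ‖c‖ₑ := by
  calc N.α (fun _ => c) = N.α (c • 1) := by congr 1; ext; simp
    _ = ‖c‖ₑ := by rw [N.smul_eq, N.one_eq, mul_one, enorm_eq_nnnorm]

lemma α_indicator_const (A : Set 𝕋) (c : ℂ) :
    N.α (A.indicator fun _ => c) = ‖c‖ₑ * N.α (A.indicator fun _ => 1) := by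
  rw [enorm_eq_nnnorm, ← N.smul_eq]
  congr 1
  ext z
  by_cases hz : z ∈ A <;> simp [hz]

lemma α_sum {ι : Type*} (s : Finset ι) (f : ι → 𝕋 → ℂ) :
    N.α (∑ i ∈ s, f i) ≤ ∑ i ∈ s, N.α (f i) :=
  Finset.le_sum_of_subadditive N.α N.α_zero.le N.add_le s f

lemma α_norm_comp_add_right (f : 𝕋 → ℂ) (w : 𝕋) :
    N.α (fun z => (‖f (z + w)‖ : ℂ)) = N.α f := by
  simpa using (N.rot_eq (-w) fun z => (‖f z‖ : ℂ)).trans (N.abs_eq f)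

lemma α_mono {f g : 𝕋 → ℂ} (hf : AEMeasurable f m) (hg : AEMeasurable g m)
    (h : ∀ᵐ z ∂m, ‖f z‖ ≤ ‖g z‖) : N.α f ≤ N.α g := by
  rw [N.simple_sup f hf, N.simple_sup g hg]
  refine iSup₂_le fun s hs => le_iSup₂_of_le s ?_ le_rfl
  filter_upwards [hs, h] with z h₁ h₂ using h₁.trans h₂

lemma α_le_add_of_norm_le {f u v : 𝕋 → ℂ} (hf : AEMeasurable f m) (hu : AEMeasurable u m)
    (hv : AEMeasurable v m) (h : ∀ᵐ z ∂m, ‖f z‖ ≤ ‖u z‖ + ‖v z‖) :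
    N.α f ≤ N.α u + N.α v := by
  calc N.α f ≤ N.α ((fun z => (‖u z‖ : ℂ)) + fun z => (‖v z‖ : ℂ)) := by
        refine N.α_mono hf (by fun_prop) (h.mono fun z hz => ?_)
        simpa [← Complex.ofReal_add, abs_of_nonneg (add_nonneg (norm_nonneg _) (norm_nonneg _))]
          using hz
    _ ≤ N.α u + N.α v := by
        rw [← N.abs_eq u, ← N.abs_eq v]
        exact N.add_le _ _

lemma α_le_of_ae_enorm_le {f : 𝕋 → ℂ} (hf : AEMeasurable f m) {C : ℝ≥0∞}
    (h : ∀ᵐ z ∂m, ‖f z‖ₑ ≤ C) : N.α f ≤ C := by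
  rcases eq_or_ne C ⊤ with rfl | hC
  · exact le_top
  calc N.α f ≤ N.α (fun _ => (C.toReal : ℂ)) := by
        refine N.α_mono hf aemeasurable_const (h.mono fun z hz => ?_)
        simpa using ENNReal.toReal_mono hC hz
    _ = C := by
        rw [N.α_const, ← ofReal_norm, Complex.norm_real, Real.norm_of_nonneg ENNReal.toReal_nonneg,
          ENNReal.ofReal_toReal hC]

lemma memL_of_memLp_top {f : 𝕋 → ℂ} (hf : MemLp f ⊤ m) : MemL N.α f := by
  have hα : N.α f ≤ eLpNormEssSup f m :=
    N.α_le_of_ae_enorm_le hf.1.aemeasurable ae_le_eLpNormEssSup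
  refine ⟨⟨hf.1.aemeasurable, (hα.trans_lt ?_).ne⟩, fun ε hε => ⟨f, hf, ?_⟩⟩
  · simpa [eLpNorm_exponent_top] using hf.2
  · simpa [N.α_zero] using hε

lemma ofReal_le_card_mul_α_add_mul_α_indicator {f : 𝕋 → ℂ} (hf : Measurable f) {n : ℕ}
    (w : Fin n → 𝕋) {c : ℝ} (hc : 0 ≤ c) {E : Set 𝕋} (hE : MeasurableSet E)
    (hdom : ∀ z ∉ E, c ≤ ∑ k, ‖f (z + w k)‖) :
    ENNReal.ofReal c ≤ n * N.α f + ENNReal.ofReal c * N.α (E.indicator fun _ => 1) := by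
  calc ENNReal.ofReal c = N.α (fun _ => (c : ℂ)) := by
        rw [N.α_const, ← ofReal_norm, Complex.norm_real, Real.norm_of_nonneg hc]
    _ ≤ N.α (∑ k, fun z => (‖f (z + w k)‖ : ℂ)) + N.α (E.indicator fun _ => (c : ℂ)) := by
        refine N.α_le_add_of_norm_le aemeasurable_const (by fun_prop)
          (aemeasurable_const.indicator hE) (.of_forall fun z => ?_)
        have hsum : ‖(∑ k, fun z => (‖f (z + w k)‖ : ℂ)) z‖ = ∑ k, ‖f (z + w k)‖ := by
          rw [Finset.sum_apply, ← Complex.ofReal_sum, Complex.norm_real,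
            Real.norm_of_nonneg (Finset.sum_nonneg fun k _ => norm_nonneg _)]
        rw [hsum, Complex.norm_real, Real.norm_of_nonneg hc]
        by_cases hz : z ∈ E
        · simp [hz, abs_of_nonneg hc, Finset.sum_nonneg fun k _ => norm_nonneg (f (z + w k))]
        · simpa [hz] using hdom z hz
    _ ≤ n * N.α f + ENNReal.ofReal c * N.α (E.indicator fun _ => 1) := by
        gcongr
        · refine (N.α_sum _ _).trans ?_
          simp [N.α_norm_comp_add_right]
        · rw [N.α_indicator_const, ← ofReal_norm, Complex.norm_real, Real.norm_of_nonneg hc]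

lemma lintegral_enorm_le_of_bounded (hN : IsContNorm N.α) {f : 𝕋 → ℂ} (hf : Measurable f)
    {B : ℝ} (hB : ∀ z, ‖f z‖ ≤ B) : ∫⁻ z, ‖f z‖ₑ ∂m ≤ 4 * N.α f := by
  have hint : Integrable f m := .of_bound hf.aestronglyMeasurable B (.of_forall hB)
  rw [← ofReal_integral_norm_eq_lintegral_enorm hint]
  set t := ∫ z, ‖f z‖ ∂m
  have ht₀ : 0 ≤ t := integral_nonneg fun z => norm_nonneg (f z)
  rcases ht₀.eq_or_lt with ht | ht
  · simp [t, ← ht]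
  obtain ⟨δ, hδ, hsmall⟩ := hN 2⁻¹ (by simp)
  obtain ⟨n, hn, w, hw⟩ :=
    exists_translates_measure_sum_lt_half_mean_lt hf.norm (fun z => norm_nonneg _) hB ht hδ
  set c := n * t / 2
  have hE : MeasurableSet {z | ∑ k, ‖f (z + w k)‖ < c} := measurableSet_lt
    (Finset.measurable_sum _ fun k _ => (hf.comp (measurable_add_const _)).norm) measurable_const
  have key : ENNReal.ofReal c ≤ n * N.α f + ENNReal.ofReal c / 2 := by
    refine (N.ofReal_le_card_mul_α_add_mul_α_indicator hf w (by positivity) hE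
      fun z hz => not_lt.mp hz).trans ?_
    rw [div_eq_mul_inv]
    gcongr
    exact (hsmall _ hE hw).le
  have hquarter : (n : ℝ≥0∞) * ENNReal.ofReal (t / 4) ≤ n * N.α f := calc
    (n : ℝ≥0∞) * ENNReal.ofReal (t / 4) = ENNReal.ofReal c / 2 := by
        rw [← ENNReal.ofReal_natCast, ← ENNReal.ofReal_mul (by positivity),
          show (n : ℝ) * (t / 4) = c / 2 by ring, ENNReal.ofReal_div_of_pos two_pos,
          ENNReal.ofReal_ofNat]
    _ ≤ n * N.α f := by
        rw [← ENNReal.sub_half ENNReal.ofReal_ne_top]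
        exact tsub_le_iff_right.mpr key
  calc ENNReal.ofReal t = 4 * ENNReal.ofReal (t / 4) := by
        rw [← ENNReal.ofReal_ofNat 4, ← ENNReal.ofReal_mul (by norm_num)]
        congr 1
        ring
    _ ≤ 4 * N.α f := by
        gcongr
        exact (ENNReal.mul_le_mul_iff_right (by simpa using hn.ne') (ENNReal.natCast_ne_top n)).mp
          hquarter

lemma lintegral_enorm_le (hN : IsContNorm N.α) {f : 𝕋 → ℂ} (hf : AEMeasurable f m) :
    ∫⁻ z, ‖f z‖ₑ ∂m ≤ 4 * N.α f := by
  rw [lintegral]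
  refine iSup₂_le fun e he => ?_
  let s := e.map fun x => (x.toReal : ℂ)
  have hs : ∀ z, ‖s z‖ₑ = e z := fun z => by
    simp [s, ← ofReal_norm, ENNReal.ofReal_toReal (ne_top_of_le_ne_top enorm_ne_top (he z))]
  obtain ⟨B, hB⟩ := s.exists_forall_norm_le
  calc e.lintegral m = ∫⁻ z, ‖s z‖ₑ ∂m := by simp_rw [hs, SimpleFunc.lintegral_eq_lintegral]
    _ ≤ 4 * N.α s := N.lintegral_enorm_le_of_bounded hN s.measurable hB
    _ ≤ 4 * N.α f := by
        gcongr
        exact N.α_mono s.aemeasurable hf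
          (.of_forall fun z => enorm_le_iff_norm_le.mp ((hs z).trans_le (he z)))

lemma integrable_of_memScriptL (hN : IsContNorm N.α) {f : 𝕋 → ℂ} (hf : MemScriptL N.α f) :
    Integrable f m :=
  ⟨hf.1.aestronglyMeasurable,
    (N.lintegral_enorm_le hN hf.1).trans_lt (ENNReal.mul_lt_top (by simp) hf.2.lt_top)⟩

lemma α_le_add_of_dist_lt_off {s f g : 𝕋 → ℂ} (hs : AEMeasurable s m) (hg : AEMeasurable g m)
    (hsf : ∀ᵐ z ∂m, ‖s z‖ ≤ ‖f z‖) {M : ℝ} (hM : ∀ z, ‖s z‖ ≤ M) {η : ℝ} (hη : 0 ≤ η)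
    {A : Set 𝕋} (hA : MeasurableSet A) (hclose : ∀ z ∉ A, dist (g z) (f z) < η) :
    N.α s ≤ N.α g + (ENNReal.ofReal η + ‖(M : ℂ)‖ₑ * N.α (A.indicator fun _ => 1)) := calc
  N.α s ≤ N.α g + N.α ((fun _ => (η : ℂ)) + A.indicator fun _ => (M : ℂ)) := by
      refine N.α_le_add_of_norm_le hs hg (aemeasurable_const.add (aemeasurable_const.indicator hA))
        (hsf.mono fun z hz => ?_)
      by_cases hzA : z ∈ A
      · rw [Pi.add_apply, Set.indicator_of_mem hzA, ← Complex.ofReal_add, Complex.norm_real,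
          Real.norm_eq_abs]
        linarith [hM z, norm_nonneg (g z), le_abs_self (η + M)]
      · rw [Pi.add_apply, Set.indicator_of_notMem hzA, add_zero, Complex.norm_real,
          Real.norm_of_nonneg hη]
        have hgf := hclose z hzA
        rw [dist_eq_norm, norm_sub_rev] at hgf
        linarith [norm_le_insert' (f z) (g z)]
  _ ≤ N.α g + (ENNReal.ofReal η + ‖(M : ℂ)‖ₑ * N.α (A.indicator fun _ => 1)) := by
      gcongr
      refine (N.add_le _ _).trans_eq ?_
      rw [N.α_const, N.α_indicator_const, ← ofReal_norm, Complex.norm_real, Real.norm_of_nonneg hη]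

lemma α_le_liminf (hN : IsContNorm N.α) {g : ℕ → 𝕋 → ℂ} {f : 𝕋 → ℂ}
    (hg : ∀ k, AEMeasurable (g k) m) (hf : AEMeasurable f m)
    (hlim : ∀ᵐ z ∂m, Tendsto (fun k => g k z) atTop (nhds (f z))) :
    N.α f ≤ liminf (fun k => N.α (g k)) atTop := by
  rw [N.simple_sup f hf]
  refine iSup₂_le fun s hs => ENNReal.le_of_forall_pos_le_add fun ε hε _ => ?_
  obtain ⟨M, hM⟩ := s.exists_forall_norm_le
  obtain ⟨η, -, hη, hηε⟩ := ENNReal.lt_iff_exists_real_btwn.mp (ENNReal.coe_pos.mpr hε)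
  set A := fun k => toMeasurable m {z | ENNReal.ofReal η ≤ edist (g k z) (f z)}
  have hA : Tendsto (fun k => m (A k)) atTop (nhds 0) := by
    simpa only [A, measure_toMeasurable] using
      tendstoInMeasure_of_tendsto_ae (fun k => (hg k).aestronglyMeasurable) hlim _ hη
  have hle : ∀ k, N.α s ≤
      N.α (g k) + (ENNReal.ofReal η + ‖(M : ℂ)‖ₑ * N.α ((A k).indicator fun _ => 1)) :=
    fun k => N.α_le_add_of_dist_lt_off s.aemeasurable (hg k) hs hM (ENNReal.ofReal_pos.mp hη).le
      (measurableSet_toMeasurable _ _) fun z hz => by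
        simpa [← edist_lt_ofReal] using fun h => hz (subset_toMeasurable _ _ h)
  have hsmall : Tendsto (fun k => ENNReal.ofReal η + ‖(M : ℂ)‖ₑ * N.α ((A k).indicator fun _ => 1))
      atTop (nhds (ENNReal.ofReal η)) := by
    simpa using tendsto_const_nhds.add (ENNReal.Tendsto.const_mul
      (hN.tendsto_indicator (fun k => measurableSet_toMeasurable _ _) hA) (Or.inr enorm_ne_top))
  have hev : ∀ᶠ k in atTop, N.α s - ε ≤ N.α (g k) :=
    (hsmall.eventually_lt_const hηε).mono fun k hk =>
      tsub_le_iff_right.mpr ((hle k).trans (by gcongr))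
  exact tsub_le_iff_right.mp (le_liminf_of_le (by isBoundedDefault) hev)

lemma exists_subseq_ae_tendsto_of_cauchy (hN : IsContNorm N.α) {F : ℕ → 𝕋 → ℂ}
    (hF : ∀ n, AEMeasurable (F n) m)
    (hcau : ∀ ε : ℝ≥0∞, 0 < ε → ∃ K : ℕ, ∀ j k : ℕ, K ≤ j → K ≤ k → N.α (F j - F k) < ε) :
    ∃ φ : ℕ → ℕ, StrictMono φ ∧ ∃ f : 𝕋 → ℂ, AEMeasurable f m ∧
      ∀ᵐ z ∂m, Tendsto (fun k => F (φ k) z) atTop (nhds (f z)) := by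
  obtain ⟨φ, hφ, hφcau⟩ := extraction_forall_of_eventually fun i : ℕ =>
    show ∀ᶠ K in atTop, ∀ j k, K ≤ j → K ≤ k → N.α (F j - F k) < 2⁻¹ ^ i by
      obtain ⟨K, hK⟩ :=
        hcau _ (ENNReal.pow_pos (ENNReal.inv_pos.mpr (ENNReal.ofNat_ne_top (n := 2))) i)
      exact eventually_atTop.mpr ⟨K, fun K' hK' j k hj hk => hK j k (hK'.trans hj) (hK'.trans hk)⟩
  have hae := Lp.ae_tendsto_of_cauchy_eLpNorm (p := 1) (fun k => (hF (φ k)).aestronglyMeasurable)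
    le_rfl (B := fun i => 4 * 2⁻¹ ^ i)
    (by simp [ENNReal.tsum_mul_left, ENNReal.tsum_geometric, ENNReal.mul_eq_top])
    fun i j k hj hk => by
      rw [eLpNorm_one_eq_lintegral_enorm]
      calc ∫⁻ z, ‖(F (φ j) - F (φ k)) z‖ₑ ∂m ≤ 4 * N.α (F (φ j) - F (φ k)) :=
            N.lintegral_enorm_le hN ((hF _).sub (hF _))
        _ < 4 * 2⁻¹ ^ i := by
            gcongr
            · simp
            · exact hφcau i _ _ (hφ.monotone hj) (hφ.monotone hk)
  have hlim : ∀ᵐ z ∂m, Tendsto (fun k => F (φ k) z) atTop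
      (nhds (limUnder atTop fun k => F (φ k) z)) :=
    hae.mono fun z ⟨l, hl⟩ => by rwa [hl.limUnder_eq]
  exact ⟨φ, hφ, _, aemeasurable_of_tendsto_metrizable_ae atTop (fun k => hF (φ k)) hlim, hlim⟩

lemma exists_tendsto_of_cauchy (hN : IsContNorm N.α) {F : ℕ → 𝕋 → ℂ}
    (hF : ∀ n, MemScriptL N.α (F n))
    (hcau : ∀ ε : ℝ≥0∞, 0 < ε → ∃ K : ℕ, ∀ j k : ℕ, K ≤ j → K ≤ k → N.α (F j - F k) < ε) :
    ∃ f : 𝕋 → ℂ, MemScriptL N.α f ∧ Tendsto (fun n => N.α (F n - f)) atTop (nhds 0) := by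
  obtain ⟨φ, hφ, f, hf, hlim⟩ := N.exists_subseq_ae_tendsto_of_cauchy hN (fun n => (hF n).1) hcau
  have hclose : ∀ ε > 0, ∃ K, ∀ j ≥ K, N.α (F j - f) ≤ ε := by
    intro ε hε
    obtain ⟨K, hK⟩ := hcau ε hε
    refine ⟨K, fun j hj => (N.α_le_liminf hN (fun k => (hF j).1.sub (hF (φ k)).1) ((hF j).1.sub hf)
      (hlim.mono fun z hz => tendsto_const_nhds.sub hz)).trans ?_⟩
    refine liminf_le_of_frequently_le' (Eventually.frequently ?_)
    filter_upwards [eventually_ge_atTop K] with k hk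
    exact (hK j (φ k) hj (hk.trans (hφ.id_le k))).le
  obtain ⟨K, hK⟩ := hclose 1 one_pos
  have hfin : N.α f ≤ N.α (F K) + N.α (F K - f) :=
    N.α_le_add_of_norm_le hf (hF K).1 ((hF K).1.sub hf)
      (.of_forall fun z => norm_le_insert (F K z) (f z))
  exact ⟨f, ⟨hf, (hfin.trans_lt (ENNReal.add_lt_top.mpr ⟨(hF K).2.lt_top,
    (hK K le_rfl).trans_lt ENNReal.one_lt_top⟩)).ne⟩, ENNReal.tendsto_atTop_zero.mpr hclose⟩

end RotNorm

/-- If α is a continuous rotationally symmetric norm, then `(ℒ^α(𝕋), α)`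
is complete (a Banach space), and `L^∞(𝕋) ⊆ L^α(𝕋) ⊆ ℒ^α(𝕋) ⊆ L^1(𝕋)`. -/
theorem scriptL_complete_and_inclusions
    (N : RotNorm) (hN : IsContNorm N.α) :
    (∀ F : ℕ → 𝕋 → ℂ, (∀ n, MemScriptL N.α (F n)) →
      (∀ ε : ℝ≥0∞, 0 < ε → ∃ K : ℕ, ∀ j k : ℕ, K ≤ j → K ≤ k → N.α (F j - F k) < ε) →
      ∃ f : 𝕋 → ℂ, MemScriptL N.α f ∧
        Tendsto (fun n => N.α (F n - f)) atTop (nhds 0)) ∧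
    (∀ f : 𝕋 → ℂ, MemLp f ⊤ m → MemL N.α f) ∧
    (∀ f : 𝕋 → ℂ, MemL N.α f → MemScriptL N.α f) ∧
    (∀ f : 𝕋 → ℂ, MemScriptL N.α f → Integrable f m) :=
  ⟨fun _ hF hcau => N.exists_tendsto_of_cauchy hN hF hcau, fun _ => N.memL_of_memLp_top,
    fun _ hf => hf.1, fun _ => N.integrable_of_memScriptL hN⟩

end
end

section
/- (General Continuity Theorem) Suppose α is a continuous rotationally symmetric norm on L^∞(𝕋) and g ∈ L^α(𝕋). Then lim_{m(E)→0⁺} α(g·χ_E) = 0; that is, for every ε > 0 there is a δ > 0 such that for every measurable E ⊆ 𝕋 with m(E) < δ one has α(g·χ_E) < ε. -/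
open MeasureTheory Filter
open scoped ENNReal Real

noncomputable section

/- Split `g·χ_E` as `(g - g')·χ_E + g'·χ_E` with `g'` bounded and `α(g - g')` small; the second
term is dominated by `‖g'‖_∞ · α(χ_E)`, which continuity of `α` makes small once `m(E)` is. -/

namespace RotNorm

variable (N : RotNorm)

lemma α_mono_ae {f h : 𝕋 → ℂ} (hf : AEMeasurable f m) (hh : AEMeasurable h m)
    (hle : ∀ᵐ z ∂m, ‖f z‖ ≤ ‖h z‖) : N.α f ≤ N.α h := by
  rw [N.simple_sup f hf, N.simple_sup h hh]
  refine iSup₂_le fun s hs => le_iSup₂_of_le s ?_ le_rfl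
  filter_upwards [hs, hle] with z h1 h2 using h1.trans h2

lemma α_indicator_le {f : 𝕋 → ℂ} (hf : AEMeasurable f m) {E : Set 𝕋} (hE : MeasurableSet E) :
    N.α (E.indicator f) ≤ N.α f :=
  N.α_mono_ae (hf.indicator hE) hf <| .of_forall fun z => by
    by_cases hz : z ∈ E <;> simp [hz]

lemma α_indicator_le_mul_of_ae_bound {f : 𝕋 → ℂ} (hf : AEMeasurable f m) {C : NNReal}
    (hC : ∀ᵐ z ∂m, ‖f z‖₊ ≤ C) {E : Set 𝕋} (hE : MeasurableSet E) :
    N.α (E.indicator f) ≤ C * N.α (E.indicator fun _ => (1 : ℂ)) := by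
  have hχ : AEMeasurable (E.indicator fun _ => (1 : ℂ)) m :=
    (aemeasurable_indicator_iff hE).2 aemeasurable_const
  calc N.α (E.indicator f) ≤ N.α ((C : ℂ) • E.indicator fun _ => (1 : ℂ)) := by
        refine N.α_mono_ae (hf.indicator hE) (hχ.const_smul _) ?_
        filter_upwards [hC] with z hz
        by_cases hzE : z ∈ E <;> simp [hzE, ← coe_nnnorm, hz]
    _ = C * N.α (E.indicator fun _ => (1 : ℂ)) := by
        rw [N.smul_eq]
        simp

end RotNorm

/-- **General Continuity Theorem.** If α is a continuous rotationally
symmetric norm and `g ∈ L^α(𝕋)`, then `α(g·χ_E) → 0` as `m(E) → 0⁺`. -/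
theorem general_continuity
    (N : RotNorm) (hc : IsContNorm N.α)
    (g : 𝕋 → ℂ) (hg : MemL N.α g) :
    ∀ ε : ℝ≥0∞, 0 < ε → ∃ δ : ℝ≥0∞, 0 < δ ∧
      ∀ E : Set 𝕋, MeasurableSet E → m E < δ → N.α (E.indicator g) < ε := by
  intro ε hε
  have hε2 : 0 < ε / 2 := ENNReal.half_pos hε.ne'
  obtain ⟨g', hg'_bdd, hg'_close⟩ := hg.2 (ε / 2) hε2
  have hg'_meas : AEMeasurable g' m := hg'_bdd.aestronglyMeasurable.aemeasurable
  obtain ⟨C, hC⟩ := eLpNormEssSup_lt_top_iff_isBoundedUnder.mp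
    (by simpa only [eLpNorm_exponent_top] using hg'_bdd.2)
  obtain ⟨δ, hδ, hsmall⟩ := hc (ε / 2 / C) (by simpa using hε2.ne')
  refine ⟨δ, hδ, fun E hE hEδ => ?_⟩
  calc N.α (E.indicator g) = N.α (E.indicator (g - g') + E.indicator g') := by
        rw [← Set.indicator_add', sub_add_cancel]
    _ ≤ N.α (g - g') + C * N.α (E.indicator fun _ => (1 : ℂ)) :=
        (N.add_le _ _).trans <| add_le_add (N.α_indicator_le (hg.1.1.sub hg'_meas) hE)
          (N.α_indicator_le_mul_of_ae_bound hg'_meas hC hE)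
    _ < ε / 2 + ε / 2 :=
        ENNReal.add_lt_add hg'_close (ENNReal.mul_lt_of_lt_div' (hsmall E hE hEδ))
    _ = ε := ENNReal.add_halves ε

end
end
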